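/- The sphere entropies converge to √2: with a(n) = (n/(2πe))^{n/2} · 2 π^{(n+1)/2} / Γ((n+1)/2) (which equals the entropy λ(Sⁿ) of the round shrinking n-sphere), the sequence a(n) tends to √2 as n → ∞. -/

import Mathlib

open Real Filter

/-- The entropy `λ(Sⁿ)` of the round shrinking `n`-sphere, in closed form:
`a n = (n/(2πe))^{n/2} · 2 π^{(n+1)/2} / Γ((n+1)/2)`. -/
noncomputable def sphereEntropy (n : ℕ) : ℝ :=
  ((n : ℝ) / (2 * π * Real.exp 1)) ^ ((n : ℝ) / 2) *
    (2 * π ^ (((n : ℝ) + 1) / 2)) / Real.Gamma (((n : ℝ) + 1) / 2)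

/-!
Write `g x = √(2π/x) (x/e)^x` for Stirling's approximation of `Γ x` and put `s = (n+1)/2`.
The closed form rearranges to `a n = √2 · e^{1/2} / ((1 + 1/n)^{n/2} · Γ s / g s)`, and
`(1 + 1/n)^{n/2} → e^{1/2}`, so it suffices that `Γ s / g s → 1` along `s ∈ ½ℕ`. At integers this
is Stirling's formula for `k!`. At half-integers it follows from Legendre's duplication formula
`Γ s Γ (s + 1/2) = 2^{1-2s} √π Γ (2s)`, which `g` satisfies up to the factor
`(1 + 1/(2s))^s e^{-1/2} → 1`.
-/

open Topology

lemma tendsto_of_tendsto_even_of_tendsto_odd {α : Type*} {f : ℕ → α} {l : Filter α}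
    (h₀ : Tendsto (fun k => f (2 * k)) atTop l) (h₁ : Tendsto (fun k => f (2 * k + 1)) atTop l) :
    Tendsto f atTop l := by
  intro s hs
  obtain ⟨a, ha⟩ := eventually_atTop.1 (h₀ hs)
  obtain ⟨b, hb⟩ := eventually_atTop.1 (h₁ hs)
  refine eventually_atTop.2 ⟨2 * (a + b), fun n hn => ?_⟩
  rcases Nat.even_or_odd' n with ⟨k, rfl | rfl⟩
  · exact ha k (by omega)
  · exact hb k (by omega)

noncomputable def stirlingApprox (x : ℝ) : ℝ := √(2 * π / x) * (x / exp 1) ^ x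

lemma stirlingApprox_pos {x : ℝ} (hx : 0 < x) : 0 < stirlingApprox x := by
  unfold stirlingApprox; positivity

lemma log_stirlingApprox {x : ℝ} (hx : 0 < x) :
    log (stirlingApprox x) = (log 2 + log π - log x) / 2 + x * (log x - 1) := by
  rw [stirlingApprox, log_mul (by positivity) (by positivity), log_sqrt (by positivity),
    log_rpow (by positivity), log_div (by positivity) hx.ne', log_mul two_ne_zero pi_ne_zero,
    log_div hx.ne' (exp_pos 1).ne', log_exp]

noncomputable def gammaStirlingRatio (x : ℝ) : ℝ := Gamma x / stirlingApprox x

lemma gammaStirlingRatio_pos {x : ℝ} (hx : 0 < x) : 0 < gammaStirlingRatio x :=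
  div_pos (Gamma_pos_of_pos hx) (stirlingApprox_pos hx)

lemma gammaStirlingRatio_natCast {n : ℕ} (hn : n ≠ 0) :
    gammaStirlingRatio n = Stirling.stirlingSeq n / √π := by
  obtain ⟨m, rfl⟩ := Nat.exists_eq_succ_of_ne_zero hn
  have hm : (0 : ℝ) < m + 1 := by positivity
  have hsqrt : √(2 * (m + 1)) * √π = (m + 1) * √(2 * π / (m + 1)) := by
    rw [← sqrt_mul (by positivity), ← sqrt_sq hm.le, ← sqrt_mul (by positivity), sqrt_sq hm.le]
    congr 1
    field_simp
  rw [gammaStirlingRatio, stirlingApprox, Stirling.stirlingSeq, Nat.cast_add_one,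
    Gamma_nat_eq_factorial, ← Nat.cast_add_one, rpow_natCast, Nat.factorial_succ,
    Nat.cast_add_one, Nat.cast_mul, Nat.cast_add_one, div_div, mul_right_comm, hsqrt]
  field_simp

lemma tendsto_gammaStirlingRatio_natCast :
    Tendsto (fun n : ℕ => gammaStirlingRatio n) atTop (𝓝 1) := by
  have h := Stirling.tendsto_stirlingSeq_sqrt_pi.div_const √π
  rw [div_self (by positivity)] at h
  refine h.congr' ?_
  filter_upwards [eventually_ne_atTop 0] with n hn
  exact (gammaStirlingRatio_natCast hn).symm

lemma stirlingApprox_mul_stirlingApprox_add_half {s : ℝ} (hs : 0 < s) :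
    stirlingApprox s * stirlingApprox (s + 1 / 2) =
      stirlingApprox (2 * s) * 2 ^ (1 - 2 * s) * √π * (1 + 1 / (2 * s)) ^ s / exp (1 / 2) := by
  have hs' : 0 < s + 1 / 2 := by linarith
  have h₁ := stirlingApprox_pos hs
  have h₂ := stirlingApprox_pos hs'
  have h₃ := stirlingApprox_pos (by linarith : 0 < 2 * s)
  refine log_injOn_pos (Set.mem_Ioi.2 (by positivity)) (Set.mem_Ioi.2 (by positivity)) ?_
  have h : 1 + 1 / (2 * s) = (s + 1 / 2) / s := by field_simp
  rw [log_div (by positivity) (exp_pos _).ne', log_mul (by positivity) (by positivity),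
    log_mul (by positivity) (by positivity), log_mul (by positivity) (by positivity),
    log_mul (by positivity) (by positivity), log_stirlingApprox hs, log_stirlingApprox hs',
    log_stirlingApprox (by linarith), log_rpow two_pos, log_sqrt pi_pos.le, h,
    log_rpow (by positivity), log_div hs'.ne' hs.ne', log_mul two_ne_zero hs.ne', log_exp]
  ring

lemma gammaStirlingRatio_mul_gammaStirlingRatio_add_half {s : ℝ} (hs : 0 < s) :
    gammaStirlingRatio s * gammaStirlingRatio (s + 1 / 2) =
      gammaStirlingRatio (2 * s) * exp (1 / 2) / (1 + 1 / (2 * s)) ^ s := by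
  have := stirlingApprox_pos (by linarith : 0 < 2 * s)
  simp only [gammaStirlingRatio]
  rw [div_mul_div_comm, Gamma_mul_Gamma_add_half_of_pos hs,
    stirlingApprox_mul_stirlingApprox_add_half hs]
  field_simp

lemma tendsto_gammaStirlingRatio_nat_add_half :
    Tendsto (fun k : ℕ => gammaStirlingRatio (k + 1 / 2)) atTop (𝓝 1) := by
  have hQ := tendsto_gammaStirlingRatio_natCast
  have hQ₂ : Tendsto (fun k : ℕ => gammaStirlingRatio (2 * k)) atTop (𝓝 1) := by
    simpa [Function.comp_def] using hQ.comp (tendsto_id.const_mul_atTop' two_pos)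
  have hE : Tendsto (fun k : ℕ => (1 + 1 / (2 * (k : ℝ))) ^ (k : ℝ)) atTop (𝓝 (exp (1 / 2))) := by
    refine (tendsto_one_add_div_pow_exp (1 / 2)).congr fun k => ?_
    rw [rpow_natCast, div_div, mul_comm]
  have h := (hQ₂.mul_const (exp (1 / 2))).div (hE.mul hQ) (by positivity)
  rw [one_mul, mul_one, div_self (by positivity)] at h
  refine h.congr' ?_
  filter_upwards [eventually_gt_atTop 0] with k hk₀
  have hk : (0 : ℝ) < k := by exact_mod_cast hk₀
  have hQk := gammaStirlingRatio_pos hk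
  have hdup := gammaStirlingRatio_mul_gammaStirlingRatio_add_half hk
  rw [eq_div_iff (by positivity)] at hdup
  rw [Pi.div_apply, eq_comm, eq_div_iff (by positivity)]
  linear_combination hdup

lemma tendsto_gammaStirlingRatio_natCast_add_one_div_two :
    Tendsto (fun n : ℕ => gammaStirlingRatio ((n + 1) / 2)) atTop (𝓝 1) := by
  refine tendsto_of_tendsto_even_of_tendsto_odd ?_ ?_
  · refine tendsto_gammaStirlingRatio_nat_add_half.congr fun k => ?_
    congr 1
    push_cast
    ring
  · refine (tendsto_gammaStirlingRatio_natCast.comp (tendsto_add_atTop_nat 1)).congr fun k => ?_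
    simp only [Function.comp_apply]
    congr 1
    push_cast
    ring

lemma sphereEntropy_eq {n : ℕ} (hn : n ≠ 0) :
    sphereEntropy n =
      √2 * exp (1 / 2) / (√((1 + 1 / (n : ℝ)) ^ n) * gammaStirlingRatio ((n + 1) / 2)) := by
  have hn' : (0 : ℝ) < n := by positivity
  have hs : (0 : ℝ) < (n + 1) / 2 := by positivity
  have hg := stirlingApprox_pos hs
  have key : ((n : ℝ) / (2 * π * exp 1)) ^ ((n : ℝ) / 2) * (2 * π ^ (((n : ℝ) + 1) / 2)) *
      √((1 + 1 / (n : ℝ)) ^ n) = √2 * exp (1 / 2) * stirlingApprox ((n + 1) / 2) := by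
    refine log_injOn_pos (Set.mem_Ioi.2 (by positivity)) (Set.mem_Ioi.2 (by positivity)) ?_
    have h : 1 + 1 / (n : ℝ) = (n + 1) / n := by field_simp
    rw [log_mul (by positivity) (by positivity), log_mul (by positivity) (by positivity),
      log_mul (by positivity) (by positivity), log_mul (by positivity) (by positivity),
      log_mul (by positivity) (by positivity), log_stirlingApprox hs, log_rpow (by positivity),
      log_rpow pi_pos, log_sqrt (by positivity), log_sqrt (by positivity), h, log_pow,
      log_div (by positivity) (by positivity), log_div (by positivity) (by positivity),
      log_div (by positivity) (by positivity), log_mul (by positivity) (by positivity),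
      log_mul (by positivity) (by positivity), log_exp, log_exp]
    ring
  have hΓ := Gamma_pos_of_pos hs
  have hc : 0 < √((1 + 1 / (n : ℝ)) ^ n) := by positivity
  rw [sphereEntropy, gammaStirlingRatio]
  generalize √((1 + 1 / (n : ℝ)) ^ n) = c at hc key ⊢
  field_simp
  linear_combination key

/-- The sphere entropies `λ(Sⁿ)` converge to `√2` as `n → ∞`. -/
theorem sphereEntropy_tendsto_sqrt_two :
    Tendsto sphereEntropy atTop (nhds (Real.sqrt 2)) := by
  have hE : Tendsto (fun n : ℕ => √((1 + 1 / (n : ℝ)) ^ n)) atTop (𝓝 (exp (1 / 2))) := by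
    simpa only [← exp_half, one_div] using (tendsto_one_add_div_pow_exp 1).sqrt
  have h := (tendsto_const_nhds (x := √2 * exp (1 / 2))).div
    (hE.mul tendsto_gammaStirlingRatio_natCast_add_one_div_two) (by positivity)
  rw [mul_one, mul_div_cancel_right₀ _ (exp_pos _).ne'] at h
  refine h.congr' ?_
  filter_upwards [eventually_ne_atTop 0] with n hn
  exact (sphereEntropy_eq hn).symm
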